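/- arXiv:1402.0471 — 2 statements merged into one kernel-verified Lean document; each statement's English description precedes it below -/
import Mathlib

section
/- Let G = (V, A) be a finite directed graph in which every vertex has at most one outgoing arc lying on a directed cycle. Then every strongly connected component of G containing at least one arc of G between two of its vertices is a single directed cycle: its vertices can be enumerated as x_0, x_1, ..., x_{k-1} (all distinct) such that the arcs of G joining two vertices of the component are exactly the arcs (x_i, x_{i+1 mod k}) for 0 ≤ i < k. -/
/-!
Within the strong component `C` of `v`, an arc `a → b` between vertices of `C` always lies on
a directed cycle, since `b` reaches `a` inside `C`. By hypothesis it is therefore the unique such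
arc out of `a`, so the arcs inside `C` form the graph of a successor map `g`, defined on all of `C`
once `C` contains one arc. Every walk inside `C` then follows `g`, hence `C` is the `g`-orbit of
`v`, which is periodic because `v` returns to itself, and enumerating this orbit by `ZMod` of the
minimal period gives the cycle.
-/

open Function Relation Set

theorem Function.exists_zmod_enumeration_of_isPeriodicPt {α : Type*} {g : α → α} {x : α}
    {n : ℕ} (hn : 0 < n) (hx : IsPeriodicPt g n x) :
    ∃ k, 0 < k ∧ ∃ f : ZMod k → α, Injective f ∧ range f = range (fun m => g^[m] x) ∧
      ∀ i, f (i + 1) = g (f i) := by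
  set k := minimalPeriod g x
  have hk : 0 < k := hx.minimalPeriod_pos hn
  have : NeZero k := ⟨hk.ne'⟩
  have hcast : ∀ m : ℕ, g^[(m : ZMod k).val] x = g^[m] x := fun m => by
    rw [ZMod.val_natCast, iterate_mod_minimalPeriod_eq]
  refine ⟨k, hk, fun i => g^[i.val] x, fun i j hij => ZMod.val_injective k
    (iterate_injOn_Iio_minimalPeriod (ZMod.val_lt i) (ZMod.val_lt j) hij), ?_, fun i => ?_⟩
  · exact (range_comp_subset_range ZMod.val (g^[·] x)).antisymm
      (range_subset_iff.2 fun m => ⟨(m : ZMod k), hcast m⟩)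
  · have hsucc := hcast (i.val + 1)
    rw [Nat.cast_succ, ZMod.natCast_zmod_val] at hsucc
    exact hsucc.trans (iterate_succ_apply' g i.val x)

section StrongComponent

variable {V : Type*} (A : V → V → Prop)

def strongComponent (v : V) : Set V :=
  {u | ReflTransGen A u v ∧ ReflTransGen A v u}

open Classical in
noncomputable def cycleSucc (u : V) : V :=
  if hu : ∃ y, A u y ∧ ReflTransGen A y u then hu.choose else u

variable {A} {v : V}

theorem reflTransGen_of_mem_strongComponent {u w : V} (hu : u ∈ strongComponent A v)
    (hw : w ∈ strongComponent A v) : ReflTransGen A u w :=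
  hu.1.trans hw.2

theorem mem_strongComponent_of_reflTransGen {u w : V} (hu : u ∈ strongComponent A v)
    (huw : ReflTransGen A u w) (hwu : ReflTransGen A w u) : w ∈ strongComponent A v :=
  ⟨hwu.trans hu.1, hu.2.trans huw⟩

theorem exists_cycle_arc_of_mem_strongComponent
    (harc : ∃ a ∈ strongComponent A v, ∃ b ∈ strongComponent A v, A a b) {u : V}
    (hu : u ∈ strongComponent A v) : ∃ y, A u y ∧ ReflTransGen A y u := by
  obtain ⟨a, ha, b, hb, hab⟩ := harc
  have hcycle : TransGen A u u :=
    (TransGen.tail' (reflTransGen_of_mem_strongComponent hu ha) hab).trans_left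
      (reflTransGen_of_mem_strongComponent hb hu)
  exact TransGen.head'_iff.mp hcycle

theorem cycleSucc_spec {u : V} (hu : ∃ y, A u y ∧ ReflTransGen A y u) :
    A u (cycleSucc A u) ∧ ReflTransGen A (cycleSucc A u) u := by
  rw [cycleSucc, dif_pos hu]
  exact hu.choose_spec

section UniqueCycleArc

variable (h : ∀ u : V, {y | A u y ∧ ReflTransGen A y u}.Subsingleton)
  (harc : ∃ a ∈ strongComponent A v, ∃ b ∈ strongComponent A v, A a b)
include h harc

theorem mem_strongComponent_and_arc_iff {a b : V} (ha : a ∈ strongComponent A v) :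
    b ∈ strongComponent A v ∧ A a b ↔ cycleSucc A a = b := by
  constructor
  · rintro ⟨hb, hab⟩
    have hba := reflTransGen_of_mem_strongComponent hb ha
    exact h a (cycleSucc_spec ⟨b, hab, hba⟩) ⟨hab, hba⟩
  · rintro rfl
    obtain ⟨hab, hba⟩ := cycleSucc_spec (exists_cycle_arc_of_mem_strongComponent harc ha)
    exact ⟨mem_strongComponent_of_reflTransGen ha (.single hab) hba, hab⟩

theorem exists_iterate_cycleSucc_eq {u w : V} (hu : u ∈ strongComponent A v)
    (hw : w ∈ strongComponent A v) : ∃ n, (cycleSucc A)^[n] u = w := by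
  induction reflTransGen_of_mem_strongComponent hu hw using ReflTransGen.head_induction_on with
  | refl => exact ⟨0, rfl⟩
  | @head p q hpq hqw ih =>
    have hq : q ∈ strongComponent A v :=
      mem_strongComponent_of_reflTransGen hu (.single hpq)
        (hqw.trans (reflTransGen_of_mem_strongComponent hw hu))
    obtain ⟨n, hn⟩ := ih hq
    refine ⟨n + 1, ?_⟩
    rw [iterate_succ_apply, (mem_strongComponent_and_arc_iff h harc hu).mp ⟨hq, hpq⟩, hn]

theorem strongComponent_eq_range_iterate_cycleSucc :
    strongComponent A v = range (fun n => (cycleSucc A)^[n] v) := by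
  have hv : v ∈ strongComponent A v := ⟨.refl, .refl⟩
  have hmaps : MapsTo (cycleSucc A) (strongComponent A v) (strongComponent A v) :=
    fun a ha => ((mem_strongComponent_and_arc_iff h harc ha).mpr rfl).1
  exact Subset.antisymm (fun w hw => exists_iterate_cycleSucc_eq h harc hv hw)
    (range_subset_iff.2 fun n => hmaps.iterate n hv)

theorem exists_isPeriodicPt_cycleSucc : ∃ n, 0 < n ∧ IsPeriodicPt (cycleSucc A) n v := by
  have hv : v ∈ strongComponent A v := ⟨.refl, .refl⟩
  have hgv := ((mem_strongComponent_and_arc_iff h harc hv).mpr rfl).1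
  obtain ⟨n, hn⟩ := exists_iterate_cycleSucc_eq h harc hgv hv
  exact ⟨n + 1, n.succ_pos, by rwa [IsPeriodicPt, IsFixedPt, iterate_succ_apply]⟩

end UniqueCycleArc

end StrongComponent

theorem stmt_2_general {V : Type*} (A : V → V → Prop)
    (h : ∀ u : V, {y | A u y ∧ Relation.ReflTransGen A y u}.Subsingleton)
    (v : V) (C : Set V)
    (hC : C = {u | Relation.ReflTransGen A u v ∧ Relation.ReflTransGen A v u})
    (harc : ∃ a ∈ C, ∃ b ∈ C, A a b) :
    ∃ k : ℕ, 0 < k ∧ ∃ f : ZMod k → V, Function.Injective f ∧ Set.range f = C ∧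
      ∀ a b : V, (a ∈ C ∧ b ∈ C ∧ A a b) ↔ ∃ i : ZMod k, f i = a ∧ f (i + 1) = b := by
  replace hC : C = strongComponent A v := hC
  subst hC
  obtain ⟨n, hn, hper⟩ := exists_isPeriodicPt_cycleSucc h harc
  obtain ⟨k, hk, f, hinj, hrange, hsucc⟩ := exists_zmod_enumeration_of_isPeriodicPt hn hper
  rw [← strongComponent_eq_range_iterate_cycleSucc h harc] at hrange
  refine ⟨k, hk, f, hinj, hrange, fun a b => ?_⟩
  calc a ∈ strongComponent A v ∧ b ∈ strongComponent A v ∧ A a b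
      ↔ a ∈ range f ∧ cycleSucc A a = b := by
        rw [hrange]
        exact and_congr_right (mem_strongComponent_and_arc_iff h harc)
    _ ↔ ∃ i, f i = a ∧ f (i + 1) = b := by
        simp only [mem_range, hsucc]
        constructor
        · rintro ⟨⟨i, rfl⟩, rfl⟩
          exact ⟨i, rfl, rfl⟩
        · rintro ⟨i, rfl, rfl⟩
          exact ⟨⟨i, rfl⟩, rfl⟩

/-- Finite directed graph `(V, A)` in which every vertex has at most one outgoing arc
lying on a directed cycle (an arc `(u, y)` lies on a directed cycle iff `A u y` and
there is a directed walk from `y` back to `u`).  Let `C` be the strongly connected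
component of a vertex `v` (the set of `u` mutually reachable from `v` by directed
walks), and suppose `C` contains an arc of `G` between two of its vertices.  Then the
vertices of `C` can be enumerated, injectively and exhaustively, as `f 0, …, f (k-1)`
indexed by `ZMod k` with `k ≥ 1`, in such a way that the arcs of `G` joining two
vertices of `C` are exactly the arcs `(f i, f (i+1))` (indices mod `k`). -/
theorem stmt_2 {V : Type*} [Fintype V] (A : V → V → Prop)
    (h : ∀ u : V, {y | A u y ∧ Relation.ReflTransGen A y u}.Subsingleton)
    (v : V) (C : Set V)
    (hC : C = {u | Relation.ReflTransGen A u v ∧ Relation.ReflTransGen A v u})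
    (harc : ∃ a ∈ C, ∃ b ∈ C, A a b) :
    ∃ k : ℕ, 0 < k ∧ ∃ f : ZMod k → V, Function.Injective f ∧ Set.range f = C ∧
      ∀ a b : V, (a ∈ C ∧ b ∈ C ∧ A a b) ↔ ∃ i : ZMod k, f i = a ∧ f (i + 1) = b :=
  stmt_2_general A h v C hC harc
end

section
/- Let n ≥ 1, let q be a positive integer, and let A be an n × n real matrix with zero diagonal whose entries all belong to {0, 1/2}, with at most two nonzero entries in each row, and such that I − A is invertible. Let b be a vector in ℚ^n each of whose entries is of the form c/(2q) for some integer c. Then every entry of the unique solution z of z = A z + b (that is, z = (I − A)^{-1} b) can be written as a fraction a/d of integers with 0 < d ≤ 6^{n/2} · q. -/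
/-!
Clearing denominators, `N := 2 (I - A)` is an integer matrix and `N (q z) = c` is an integer
vector, so by Cramer's rule `q z = adj(N) c / det N`. The square of `Nᵢⱼ = 2δᵢⱼ - 2Aᵢⱼ` is at most
`4δᵢⱼ + [Aᵢⱼ ≠ 0]`, so every row of `N` has squared Euclidean norm at most `4 + 2 = 6`, and
Hadamard's inequality gives `|det N| ≤ √6 ^ n`.
-/

open Matrix

theorem Matrix.abs_det_le_prod_sqrt_sum_sq_row {n : ℕ} (M : Matrix (Fin n) (Fin n) ℝ) :
    |M.det| ≤ ∏ i, √(∑ j, M i j ^ 2) := by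
  have : Fact (Module.finrank ℝ (EuclideanSpace ℝ (Fin n)) = n) := ⟨finrank_euclideanSpace_fin⟩
  let b := EuclideanSpace.basisFun (Fin n) ℝ
  have key := b.toBasis.orientation.abs_volumeForm_apply_le (fun i => WithLp.toLp 2 (M i))
  rw [b.toBasis.orientation.volumeForm_robust b rfl, Module.Basis.det_apply] at key
  convert key using 2
  · rw [← det_transpose]; rfl
  · simp [EuclideanSpace.norm_eq]

theorem Matrix.abs_det_le_sqrt_pow_of_sum_sq_row_le {n : ℕ} {M : Matrix (Fin n) (Fin n) ℝ}
    {c : ℝ} (h : ∀ i, ∑ j, M i j ^ 2 ≤ c) : |M.det| ≤ √c ^ n := by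
  calc |M.det| ≤ ∏ i, √(∑ j, M i j ^ 2) := M.abs_det_le_prod_sqrt_sum_sq_row
    _ ≤ ∏ _i : Fin n, √c :=
      Finset.prod_le_prod (fun _ _ => Real.sqrt_nonneg _) fun i _ => Real.sqrt_le_sqrt (h i)
    _ = √c ^ n := by rw [Finset.prod_const, Finset.card_fin]

theorem Matrix.eq_adjugate_mulVec_div_det {ι : Type*} [Fintype ι] [DecidableEq ι]
    {N : Matrix ι ι ℤ} (hN : N.det ≠ 0) {x : ι → ℚ} {c : ι → ℤ}
    (h : N.map (↑) *ᵥ x = fun i => (c i : ℚ)) (i : ι) :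
    x i = ((N.adjugate *ᵥ c) i : ℚ) / N.det := by
  have hcast : ((N.adjugate *ᵥ c) i : ℚ) = (N.adjugate.map (↑) *ᵥ fun i => (c i : ℚ)) i :=
    RingHom.map_mulVec (Int.castRingHom ℚ) _ _ _
  have hadj : N.adjugate.map ((↑) : ℤ → ℚ) = (N.map (↑)).adjugate :=
    RingHom.map_adjugate (Int.castRingHom ℚ) N
  rw [eq_div_iff (by exact_mod_cast hN), hcast, hadj, ← h, mulVec_mulVec, adjugate_mul,
    smul_mulVec, one_mulVec, Pi.smul_apply, smul_eq_mul, Int.cast_det, mul_comm]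

theorem Matrix.det_ne_zero_of_map_eq_smul {ι : Type*} [Fintype ι] [DecidableEq ι]
    {N : Matrix ι ι ℤ} {M : Matrix ι ι ℚ} {k : ℚ} (hk : k ≠ 0) (hN : N.map (↑) = k • M)
    (hM : IsUnit M) : N.det ≠ 0 := by
  have hdet : (N.det : ℚ) = k ^ Fintype.card ι * M.det := by rw [Int.cast_det, hN, det_smul]
  have hM : M.det ≠ 0 := ((isUnit_iff_isUnit_det _).mp hM).ne_zero
  exact_mod_cast hdet ▸ mul_ne_zero (pow_ne_zero _ hk) hM

theorem Matrix.exists_intMatrix_map_eq_two_smul_one_sub {ι : Type*} [DecidableEq ι]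
    {A : Matrix ι ι ℚ} (hent : ∀ i j, A i j = 0 ∨ A i j = 1 / 2) :
    ∃ N : Matrix ι ι ℤ, N.map (↑) = (2 : ℚ) • (1 - A) := by
  have h : ∀ i j, ∃ k : ℤ, (k : ℚ) = 2 * ((1 : Matrix ι ι ℚ) i j - A i j) := by
    intro i j
    obtain rfl | hij := eq_or_ne i j
    · rcases hent i i with h | h
      exacts [⟨2, by simp [h]⟩, ⟨1, by norm_num [h]⟩]
    · rcases hent i j with h | h
      exacts [⟨0, by simp [h, hij]⟩, ⟨-1, by norm_num [h, hij]⟩]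
  choose N hN using h
  exact ⟨of N, by ext i j; exact hN i j⟩

theorem Matrix.sum_sq_two_smul_one_sub_row_le_six {ι K : Type*} [Fintype ι] [DecidableEq ι]
    [Field K] [LinearOrder K] [IsStrictOrderedRing K] {A : Matrix ι ι K} (i : ι)
    (hent : ∀ j, A i j = 0 ∨ A i j = 1 / 2) (hrow : {j | A i j ≠ 0}.ncard ≤ 2) :
    ∑ j, ((2 : K) • (1 - A)) i j ^ 2 ≤ 6 := by
  have hterm : ∀ j, ((2 : K) • (1 - A)) i j ^ 2 ≤
      4 * (1 : Matrix ι ι K) i j + if A i j ≠ 0 then 1 else 0 := by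
    intro j
    obtain rfl | hij := eq_or_ne i j
    · rcases hent i with h | h <;> norm_num [h]
    · rcases hent j with h | h <;> norm_num [h, hij]
  have hcard : ((Finset.univ.filter fun j => A i j ≠ 0).card : K) ≤ 2 := by
    rw [Set.ncard_eq_toFinset_card', Set.toFinset_ofPred] at hrow
    exact_mod_cast hrow
  calc ∑ j, ((2 : K) • (1 - A)) i j ^ 2
      ≤ ∑ j, (4 * (1 : Matrix ι ι K) i j + if A i j ≠ 0 then 1 else 0) :=
        Finset.sum_le_sum fun j _ => hterm j
    _ ≤ 6 := by
        rw [Finset.sum_add_distrib, ← Finset.mul_sum, Finset.sum_boole]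
        simp [one_apply]
        linarith

theorem Rat.exists_pos_den_le_of_eq_div {x : ℚ} {a d : ℤ} (hd : d ≠ 0) (hx : x = a / d) {B : ℝ}
    (hB : |(d : ℝ)| ≤ B) : ∃ a' d' : ℤ, 0 < d' ∧ (d' : ℝ) ≤ B ∧ x = a' / d' := by
  rcases hd.lt_or_gt with hneg | hpos
  · refine ⟨-a, -d, by omega, ?_, by rw [hx]; push_cast; rw [neg_div_neg_eq]⟩
    rwa [abs_of_neg (by exact_mod_cast hneg), ← Int.cast_neg] at hB
  · refine ⟨a, d, hpos, ?_, hx⟩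
    rwa [abs_of_pos (by exact_mod_cast hpos)] at hB

theorem stmt_5_general (n : ℕ) (q : ℕ) (hq : 0 < q)
    (A : Matrix (Fin n) (Fin n) ℚ)
    (hent : ∀ i j, A i j = 0 ∨ A i j = 1 / 2)
    (hrow : ∀ i, {j | A i j ≠ 0}.ncard ≤ 2)
    (hinv : IsUnit (1 - A))
    (b z : Fin n → ℚ)
    (hb : ∀ i, ∃ c : ℤ, b i = (c : ℚ) / (2 * q))
    (hz : z = A.mulVec z + b) :
    ∀ i, ∃ a d : ℤ, 0 < d ∧ (d : ℝ) ≤ Real.sqrt 6 ^ n * q ∧ z i = (a : ℚ) / d := by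
  choose c hc using hb
  obtain ⟨N, hN⟩ := exists_intMatrix_map_eq_two_smul_one_sub hent
  have hdet : N.det ≠ 0 := det_ne_zero_of_map_eq_smul two_ne_zero hN hinv
  have hsolve : N.map (↑) *ᵥ ((q : ℚ) • z) = fun i => (c i : ℚ) := by
    have hAz : (1 - A) *ᵥ z = b := by rw [sub_mulVec, one_mulVec]; exact sub_eq_of_eq_add' hz
    funext i
    rw [hN, smul_mulVec, mulVec_smul, hAz, Pi.smul_apply, Pi.smul_apply, hc i, smul_eq_mul,
      smul_eq_mul]
    field_simp
  have hbound : |(N.det : ℝ)| ≤ √6 ^ n := by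
    rw [Int.cast_det]
    refine abs_det_le_sqrt_pow_of_sum_sq_row_le fun i => ?_
    have h := sum_sq_two_smul_one_sub_row_le_six i (hent i) (hrow i)
    rw [← hN] at h
    simp only [map_apply] at h ⊢
    exact_mod_cast h
  intro i
  refine Rat.exists_pos_den_le_of_eq_div (a := (N.adjugate *ᵥ c) i) (d := N.det * q)
    (mul_ne_zero hdet (by exact_mod_cast hq.ne')) ?_ ?_
  · rw [Int.cast_mul, Int.cast_natCast, ← div_div,
      ← eq_adjugate_mulVec_div_det hdet hsolve i, Pi.smul_apply, smul_eq_mul,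
      mul_div_cancel_left₀ _ (by positivity)]
  · rw [Int.cast_mul, Int.cast_natCast, abs_mul, Nat.abs_cast]
    exact mul_le_mul_of_nonneg_right hbound (Nat.cast_nonneg q)

/-- Let `A` be an `n × n` rational matrix (`n ≥ 1`) with zero diagonal, entries in
`{0, 1/2}`, at most two nonzero entries per row, and `I - A` invertible.  Let `b` be a
vector whose entries have the form `c / (2q)` with `c ∈ ℤ` and `q ∈ ℕ`, `q > 0`.  Then
every entry of the unique solution `z` of `z = A z + b` is a fraction `a / d` of
integers with `0 < d ≤ 6^(n/2) · q = (√6)^n · q`. -/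
theorem stmt_5 (n : ℕ) (hn : 1 ≤ n) (q : ℕ) (hq : 0 < q)
    (A : Matrix (Fin n) (Fin n) ℚ)
    (hdiag : ∀ i, A i i = 0)
    (hent : ∀ i j, A i j = 0 ∨ A i j = 1 / 2)
    (hrow : ∀ i, {j | A i j ≠ 0}.ncard ≤ 2)
    (hinv : IsUnit (1 - A))
    (b z : Fin n → ℚ)
    (hb : ∀ i, ∃ c : ℤ, b i = (c : ℚ) / (2 * q))
    (hz : z = A.mulVec z + b) :
    ∀ i, ∃ a d : ℤ, 0 < d ∧ (d : ℝ) ≤ Real.sqrt 6 ^ n * q ∧ z i = (a : ℚ) / d :=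
  stmt_5_general n q hq A hent hrow hinv b z hb hz
end
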